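/- arXiv:1209.0046 — 3 statements merged into one kernel-verified Lean document; each statement's English description precedes it below -/
import Mathlib

section
/- Let A → B be a local homomorphism of local rings making B a flat A-algebra, and let M be an A-module. Then M is a free A-module of finite rank if and only if M ⊗_A B is a free B-module of finite rank. -/
/-!
Over a local ring, a finite flat module is free, so it suffices to descend finiteness and
flatness from `B ⊗[A] M` to `M`; both descend along `A → B`, which is faithfully flat because
it is flat and local.
-/

open TensorProduct

theorem Module.free_of_finite_flat_tensorProduct_of_faithfullyFlat {A M : Type*} (B : Type*)
    [CommRing A] [IsLocalRing A] [CommRing B] [Algebra A B] [Module.FaithfullyFlat A B]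
    [AddCommGroup M] [Module A M] [Module.Finite B (B ⊗[A] M)] [Module.Flat B (B ⊗[A] M)] :
    Module.Finite A M ∧ Module.Free A M :=
  have : Module.Finite A M := .of_finite_tensorProduct_of_faithfullyFlat B
  have : Module.Flat A M := .of_flat_tensorProduct A M B
  ⟨inferInstance, Module.free_of_flat_of_isLocalRing⟩

/-- Let `A → B` be a local homomorphism of local rings making `B` a flat
`A`-algebra, and let `M` be an `A`-module.  Then `M` is a free `A`-module of finite rank if and
only if `M ⊗_A B` is a free `B`-module of finite rank. -/
theorem stmt_0 (A B : Type*) [CommRing A] [CommRing B] [IsLocalRing A] [IsLocalRing B]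
    [Algebra A B] [IsLocalHom (algebraMap A B)] [Module.Flat A B]
    (M : Type*) [AddCommGroup M] [Module A M] :
    (Module.Finite A M ∧ Module.Free A M) ↔
      (Module.Finite B (TensorProduct A B M) ∧ Module.Free B (TensorProduct A B M)) := by
  refine ⟨fun ⟨_, _⟩ ↦ ⟨inferInstance, inferInstance⟩, fun ⟨_, _⟩ ↦ ?_⟩
  have : Module.FaithfullyFlat A B := .of_flat_of_isLocalHom
  exact Module.free_of_finite_flat_tensorProduct_of_faithfullyFlat B
end

section
/- Let X be a smooth proper curve over a perfect field k of characteristic p, D an effective Cartier divisor on X with reduction D_red, and V the Cartier operator (trace of absolute Frobenius) on meromorphic differentials. Then for every positive integer n, the inclusion H^0(X, Ω¹_{X/k}(D_red)) ⊆ H^0(X, Ω¹_{X/k}(nD)) induces an isomorphism on the V-ordinary subspaces (the maximal subspaces on which V acts bijectively). -/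
/-!
Pole orders along `D` shrink under `V` by ceiling division by `p`, so `V^N` maps
`H^0(Ω¹(nD))` into `H^0(Ω¹(D_red))` as soon as `p^N` dominates every multiplicity of `nD`.
Hence `im V^(m+N)` on `H^0(Ω¹(nD))` lies in `im V^m` on `H^0(Ω¹(D_red))`, and intersecting
over `m` identifies the two ordinary parts.
-/

open Set Function

section CeilDiv

variable {α β : Type*} [Semiring α] [PartialOrder α] [AddCommMonoid β] [PartialOrder β]
  [MulActionWithZero α β] [CeilDiv α β]

theorem iterate_ceilDiv_le_of_le_pow_smul {a : α} (ha : 0 < a) :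
    ∀ (m : ℕ) {b c : β}, b ≤ a ^ m • c → (· ⌈/⌉ a)^[m] b ≤ c
  | 0, _, _, h => by simpa using h
  | m + 1, b, c, h => by
    rw [iterate_succ_apply]
    refine iterate_ceilDiv_le_of_le_pow_smul ha m ?_
    rwa [ceilDiv_le_iff_le_smul ha, ← mul_smul, ← pow_succ']

end CeilDiv

theorem Set.MapsTo.iterate_of_forall {α ι : Type*} {f : α → α} {g : ι → ι} {S : ι → Set α}
    (h : ∀ i, MapsTo f (S i) (S (g i))) : ∀ (m : ℕ) (i : ι), MapsTo f^[m] (S i) (S (g^[m] i))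
  | 0, _ => mapsTo_id _
  | m + 1, i => by
    rw [iterate_succ, iterate_succ_apply]
    exact (Set.MapsTo.iterate_of_forall h m (g i)).comp (h i)

def ordinaryPart {α : Type*} (f : α → α) (s : Set α) : Set α :=
  ⋂ m : ℕ, f^[m] '' s

theorem ordinaryPart_mono {α : Type*} (f : α → α) {s t : Set α} (hst : s ⊆ t) :
    ordinaryPart f s ⊆ ordinaryPart f t :=
  iInter_mono fun _ => image_mono hst

theorem ordinaryPart_eq_of_mapsTo_iterate {α : Type*} {f : α → α} {s t : Set α} (hst : s ⊆ t)
    {N : ℕ} (hN : MapsTo f^[N] t s) : ordinaryPart f s = ordinaryPart f t := by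
  refine (ordinaryPart_mono f hst).antisymm fun a ha => mem_iInter.2 fun m => ?_
  obtain ⟨b, hb, rfl⟩ := mem_iInter.1 ha (m + N)
  exact ⟨f^[N] b, hN hb, (iterate_add_apply f m N b).symm⟩

theorem stmt_6_general (k : Type*) [Field k] (p : ℕ) [Fact p.Prime] [CharP k p] [PerfectRing k p]
    (A : Type*) [AddCommGroup A] [Module k A]
    (P : Type*) [Fintype P]
    (H : (P → ℕ) → Submodule k A)
    (hmono : Monotone H)
    (V : A →ₛₗ[((frobeniusEquiv k p).symm : k →+* k)] A)
    (hpole : ∀ (c : P → ℕ), ∀ a ∈ H c, V a ∈ H (fun x => (c x + p - 1) / p))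
    (d : P → ℕ) (hd : ∀ x : P, 1 ≤ d x)
    (n : ℕ) (hn : 0 < n) :
    (⋂ m : ℕ, (⇑V)^[m] '' ((H (fun _ => 1) : Set A))) =
      ⋂ m : ℕ, (⇑V)^[m] '' ((H (fun x => n * d x) : Set A)) := by
  have hp : 0 < p := (Fact.out : p.Prime).pos
  let N : ℕ := Finset.univ.sup fun x => n * d x
  have hdom : (fun x => n * d x) ≤ p ^ N • (1 : P → ℕ) := fun x =>
    calc n * d x ≤ N := Finset.le_sup (f := fun x => n * d x) (Finset.mem_univ x)
      _ ≤ p ^ N * 1 := by simpa using (Nat.lt_pow_self (Fact.out : p.Prime).one_lt).le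
  have hV : MapsTo (⇑V)^[N] (H fun x => n * d x) (H 1) := fun _ ha =>
    hmono (iterate_ceilDiv_le_of_le_pow_smul hp N hdom)
      (MapsTo.iterate_of_forall (fun c _ => hpole c _) N _ ha)
  exact ordinaryPart_eq_of_mapsTo_iterate
    (hmono fun x => Nat.one_le_iff_ne_zero.2 (Nat.mul_pos hn (hd x)).ne') hV

/-- **control lemma for the Cartier operator.**
Let `X` be a smooth proper curve over a perfect field `k` of characteristic `p`, and `D` an
effective Cartier divisor on `X`.  We encode the divisors supported on the (finite) support `P`
of `D` by their multiplicity functions `c : P → ℕ`, and the spaces of meromorphic differentials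
`H^0(X, Ω¹_{X/k}(Σ c(x)·x))` by an increasing family of finite-dimensional subspaces
`H c` of the ambient `k`-vector space `A` of meromorphic differentials.  The Cartier operator
(trace of absolute Frobenius) `V` is `φ⁻¹`-semilinear (for `φ` the Frobenius of `k`) and
improves poles: `V` maps `H c` into `H ⌈c/p⌉` (coefficientwise ceiling, `⌈a/p⌉ = (a+p−1)/p`).
The divisor `D` has multiplicity `d : P → ℕ` with `d x ≥ 1` on its support, and its reduction
`D_red` has all multiplicities `1`.  Then for every positive integer `n`, the inclusion
`H^0(X, Ω¹(D_red)) ⊆ H^0(X, Ω¹(nD))` induces an isomorphism on the `V`-ordinary subspaces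
(the maximal subspaces on which `V` acts bijectively, namely `⋂_m im(V^m)`): the two ordinary
subspaces coincide. -/
theorem stmt_6 (k : Type*) [Field k] (p : ℕ) [Fact p.Prime] [CharP k p] [PerfectRing k p]
    (A : Type*) [AddCommGroup A] [Module k A]
    (P : Type*) [Fintype P]
    (H : (P → ℕ) → Submodule k A)
    (hmono : Monotone H)
    (hfd : ∀ c : P → ℕ, FiniteDimensional k (H c))
    (V : A →ₛₗ[((frobeniusEquiv k p).symm : k →+* k)] A)
    (hpole : ∀ (c : P → ℕ), ∀ a ∈ H c, V a ∈ H (fun x => (c x + p - 1) / p))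
    (d : P → ℕ) (hd : ∀ x : P, 1 ≤ d x)
    (n : ℕ) (hn : 0 < n) :
    (⋂ m : ℕ, (⇑V)^[m] '' ((H (fun _ => 1) : Set A))) =
      ⋂ m : ℕ, (⇑V)^[m] '' ((H (fun x => n * d x) : Set A)) :=
  stmt_6_general k p A P H hmono V hpole d hd n hn
end

section
/- With the hypotheses of the tower lemma (towers {A_r}, principal ideals I_r, finite free A_r-modules M_r with Δ-action, M_r/I_rM_r free of rank d over (A_r/I_r)[Δ/Δ_r], and surjective reduced transition maps M_r/I_rM_r → (M_s/I_sM_s) ⊗ (A_r/I_r) for s ≤ r), the transition maps induce isomorphisms M_r ⊗_{A_r[Δ/Δ_r]} A_r[Δ/Δ_s] ≅ M_s ⊗_{A_s} A_r of A_r[Δ/Δ_s]-modules for all r ≥ s. -/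
/-!
Since `fA` lies in the Jacobson radical of the local ring `A` and all modules are finite over `A`,
Nakayama's lemma over `A` lifts both statements about reductions: `φ` is surjective, and lifts
`wᵢ` of the given basis of `Mr / fA Mr` generate `Mr` over `A[Δ/Δr]`. The `d` elements `φ wᵢ` then
generate `N`, free of rank `d` over `A[Δ/Δs]`, so they form a basis of it: a surjective
endomorphism of a finite module over a commutative ring is injective. Hence
`φ (∑ cᵢ wᵢ) = ∑ π(cᵢ) φ wᵢ` vanishes exactly when every `cᵢ` lies in the kernel of
the projection `π : A[Δ/Δr] → A[Δ/Δs]`.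
-/

open Submodule Function

theorem Submodule.span_eq_top_of_map_mkQ_smul_eq_top {A R M : Type*} [CommRing A] [CommRing R]
    [Algebra A R] [AddCommGroup M] [Module A M] [Module R M] [IsScalarTower A R M]
    [Module.Finite A M] {I : Ideal A} (hI : I ≤ Ideal.jacobson ⊥) {s : Set M}
    (hs : (span R s).map (I.map (algebraMap A R) • (⊤ : Submodule R M)).mkQ = ⊤) :
    span R s = ⊤ := by
  rw [map_mkQ_eq_top, sup_comm] at hs
  apply restrictScalars_injective A
  refine top_le_iff.mp (le_of_le_smul_of_le_jacobson_bot Module.Finite.fg_top hI ?_)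
  rw [← restrictScalars_top A R M, ← Ideal.smul_restrictScalars, ← restrictScalars_sup, hs]

section SemilinearMap

variable {R S M N : Type*} [CommRing R] [CommRing S] [AddCommGroup M] [Module R M]
  [AddCommGroup N] [Module S N] {π : R →+* S}

theorem span_range_comp_eq_top_of_surjective (φ : M →ₛₗ[π] N) (hφ : Surjective φ)
    {ι : Type*} {w : ι → M} (hw : span R (Set.range w) = ⊤) :
    span S (Set.range (φ ∘ w)) = ⊤ := by
  suffices h : ∀ x ∈ span R (Set.range w), φ x ∈ span S (Set.range (φ ∘ w)) from
    eq_top_iff.mpr fun y _ => (hφ y).elim fun x hx => hx ▸ h x (hw ▸ mem_top)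
  intro x hx
  induction hx using span_induction with
  | mem _ h => obtain ⟨i, rfl⟩ := h; exact subset_span ⟨i, rfl⟩
  | zero => simp
  | add _ _ _ _ hx hy => simpa using add_mem hx hy
  | smul r _ _ hx => simpa using smul_mem _ (π r) hx

theorem LinearMap.ker_eq_ker_smul_top (φ : M →ₛₗ[π] N) {ι : Type*} {w : ι → M}
    (hw : span R (Set.range w) = ⊤) (hli : LinearIndependent S (φ ∘ w)) :
    LinearMap.ker φ = RingHom.ker π • (⊤ : Submodule R M) := by
  refine le_antisymm (fun x hx => ?_) <|
    smul_le.mpr fun r hr m _ => by simp [RingHom.mem_ker.mp hr]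
  obtain ⟨c, rfl⟩ := Finsupp.mem_span_range_iff_exists_finsupp.mp (hw ▸ mem_top : x ∈ _)
  have hc : c.mapRange π (map_zero π) = 0 := by
    refine linearIndependent_iff.mp hli _ ?_
    rw [Finsupp.linearCombination_apply, Finsupp.sum_mapRange_index (by simp), ← hx.out,
      map_finsuppSum]
    exact Finsupp.sum_congr fun i _ => (φ.map_smulₛₗ (c i) (w i)).symm
  refine sum_mem fun i _ => smul_mem_smul ?_ mem_top
  simpa using DFunLike.congr_fun hc i

theorem linearIndependent_of_span_eq_top_of_basis {ι : Type*} [Finite ι] (e : Module.Basis ι S N)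
    {v : ι → N} (hv : span S (Set.range v) = ⊤) : LinearIndependent S v := by
  have hsurj : Surjective (Finsupp.linearCombination S v) := by
    rw [← LinearMap.range_eq_top, Finsupp.range_linearCombination, hv]
  exact Injective.of_comp (f := e.repr) <|
    OrzechProperty.injective_of_surjective_endomorphism (e.repr.toLinearMap ∘ₗ _)
      (e.repr.surjective.comp hsurj)

def LinearMap.restrictScalarsOfAlgebraMap {A : Type*} [CommRing A] [Algebra A R] [Algebra A S]
    [Module A M] [IsScalarTower A R M] [Module A N] [IsScalarTower A S N]
    (φ : M →ₛₗ[π] N) (hπ : π.comp (algebraMap A R) = algebraMap A S) : M →ₗ[A] N where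
  toFun := φ
  map_add' := φ.map_add
  map_smul' a m := by
    rw [← algebraMap_smul R a m, φ.map_smulₛₗ, ← RingHom.comp_apply, hπ, algebraMap_smul]
    rfl

theorem surjective_and_ker_eq_of_basis_mod {A : Type*} [CommRing A] [Algebra A R] [Algebra A S]
    [Module A M] [IsScalarTower A R M] [Module.Finite A M]
    [Module A N] [IsScalarTower A S N] [Module.Finite A N]
    {I : Ideal A} (hI : I ≤ Ideal.jacobson ⊥) (hπ : π.comp (algebraMap A R) = algebraMap A S)
    {ι : Type*} [Finite ι]
    (b : Module.Basis ι (R ⧸ I.map (algebraMap A R))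
      (M ⧸ (I.map (algebraMap A R) • (⊤ : Submodule R M))))
    (e : Module.Basis ι S N) (φ : M →ₛₗ[π] N)
    (hφ : ∀ y : N, ∃ m : M, y - φ m ∈ I • (⊤ : Submodule A N)) :
    Surjective φ ∧ LinearMap.ker φ = RingHom.ker π • (⊤ : Submodule R M) := by
  have hsurj : Surjective φ := by
    refine (φ.restrictScalarsOfAlgebraMap hπ).surjective_of_surjective_comp_mkQ I hI fun q => ?_
    obtain ⟨y, rfl⟩ := mkQ_surjective _ q
    obtain ⟨m, hm⟩ := hφ y
    exact ⟨m, (Submodule.Quotient.eq _).mpr (by rw [← neg_sub]; exact neg_mem hm)⟩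
  choose w hw using fun i => mkQ_surjective _ (b i)
  have hw_span : span R (Set.range w) = ⊤ := by
    refine span_eq_top_of_map_mkQ_smul_eq_top hI ?_
    rw [map_span, ← Set.range_comp, show _ ∘ w = b from funext hw,
      ← restrictScalars_span R (R ⧸ I.map (algebraMap A R)) Ideal.Quotient.mk_surjective,
      b.span_eq, restrictScalars_top]
  have hli : LinearIndependent S (φ ∘ w) := linearIndependent_of_span_eq_top_of_basis e
    (span_range_comp_eq_top_of_surjective φ hsurj hw_span)
  exact ⟨hsurj, φ.ker_eq_ker_smul_top hw_span hli⟩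

end SemilinearMap

theorem stmt_11_general
    (A : Type*) [CommRing A] [IsLocalRing A]
    (fA : A) (hfA : ¬ IsUnit fA)
    (Δ : Type*) [CommGroup Δ] (Δr Δs : Subgroup Δ)
    [Finite (Δ ⧸ Δs)]
    (hrs : Δr ≤ Δs.comap (MonoidHom.id Δ))
    (Mr : Type*) [AddCommGroup Mr] [Module A Mr] [Module (MonoidAlgebra A (Δ ⧸ Δr)) Mr]
    [IsScalarTower A (MonoidAlgebra A (Δ ⧸ Δr)) Mr] [Module.Finite A Mr]
    (d : ℕ)
    (hredfree : Nonempty (Module.Basis (Fin d)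
        ((MonoidAlgebra A (Δ ⧸ Δr)) ⧸
          (Ideal.span {fA}).map (algebraMap A (MonoidAlgebra A (Δ ⧸ Δr))))
        (Mr ⧸ ((Ideal.span {fA}).map (algebraMap A (MonoidAlgebra A (Δ ⧸ Δr))) •
          (⊤ : Submodule (MonoidAlgebra A (Δ ⧸ Δr)) Mr)))))
    (N : Type*) [AddCommGroup N] [Module A N] [Module (MonoidAlgebra A (Δ ⧸ Δs)) N]
    [IsScalarTower A (MonoidAlgebra A (Δ ⧸ Δs)) N]
    (hNfree : Nonempty (Module.Basis (Fin d) (MonoidAlgebra A (Δ ⧸ Δs)) N))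
    (φ : Mr →ₛₗ[MonoidAlgebra.mapDomainRingHom A
        (QuotientGroup.map Δr Δs (MonoidHom.id Δ) hrs)] N)
    (hredsurj : ∀ y : N, ∃ m : Mr, y - φ m ∈ (Ideal.span {fA} • (⊤ : Submodule A N))) :
    Function.Surjective φ ∧
      LinearMap.ker φ = (RingHom.ker (MonoidAlgebra.mapDomainRingHom A
        (QuotientGroup.map Δr Δs (MonoidHom.id Δ) hrs))) •
          (⊤ : Submodule (MonoidAlgebra A (Δ ⧸ Δr)) Mr) := by
  obtain ⟨b⟩ := hredfree
  obtain ⟨e⟩ := hNfree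
  have : Module.Finite A (MonoidAlgebra A (Δ ⧸ Δs)) :=
    Module.Finite.of_basis (MonoidAlgebra.basis (Δ ⧸ Δs) A)
  have : Module.Finite (MonoidAlgebra A (Δ ⧸ Δs)) N := Module.Finite.of_basis e
  have : Module.Finite A N := Module.Finite.trans (MonoidAlgebra A (Δ ⧸ Δs)) N
  have hI : Ideal.span {fA} ≤ Ideal.jacobson ⊥ := by
    rw [IsLocalRing.jacobson_eq_maximalIdeal ⊥ bot_ne_top, Ideal.span_singleton_le_iff_mem]
    exact hfA
  exact surjective_and_ker_eq_of_basis_mod hI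
    (RingHom.ext (MonoidAlgebra.mapDomain_algebraMap A _)) b e φ hredsurj

/-- **tower lemma, control isomorphism.** With the hypotheses of the tower
lemma — local rings `B → A` (levels `s ≤ r`) with proper principal ideals `(f_B)`, `(f_A)`
compatible under the transition map, `A` separated, a finite free `A`-module `Mr` with an
action of `Δ` through the finite quotient `Δ/Δr` whose reduction `Mr/f_A·Mr` is free of rank
`d` over `(A/f_A)[Δ/Δr]`, a module `N` (playing the role of `M_s ⊗_{A_s} A_r`, free of rank `d`
over `A[Δ/Δs]`), and a `Δ`-equivariant `A`-linear transition map `φ : Mr → N` (semilinear over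
the projection `A[Δ/Δr] → A[Δ/Δs]`) which is surjective modulo `f_A` — the transition map
induces an isomorphism `Mr ⊗_{A[Δ/Δr]} A[Δ/Δs] ≅ N`; equivalently, `φ` is surjective with
kernel `ker(A[Δ/Δr] → A[Δ/Δs])·Mr`. -/
theorem stmt_11
    (B A : Type*) [CommRing B] [CommRing A] [IsLocalRing B] [IsLocalRing A]
    (g : B →+* A) [IsLocalHom g]
    (fB : B) (fA : A) (hfB : ¬ IsUnit fB) (hfA : ¬ IsUnit fA)
    (hcomp : g fB ∈ Ideal.span {fA})
    (hsep : (⨅ n : ℕ, Ideal.span {fA} ^ n) = (⊥ : Ideal A))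
    (Δ : Type*) [CommGroup Δ] (Δr Δs : Subgroup Δ) [Δr.Normal] [Δs.Normal]
    [Finite (Δ ⧸ Δr)] [Finite (Δ ⧸ Δs)]
    (hrs : Δr ≤ Δs.comap (MonoidHom.id Δ))
    (Mr : Type*) [AddCommGroup Mr] [Module A Mr] [Module (MonoidAlgebra A (Δ ⧸ Δr)) Mr]
    [IsScalarTower A (MonoidAlgebra A (Δ ⧸ Δr)) Mr] [Module.Finite A Mr] [Module.Free A Mr]
    (d : ℕ)
    (hredfree : Nonempty (Module.Basis (Fin d)
        ((MonoidAlgebra A (Δ ⧸ Δr)) ⧸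
          (Ideal.span {fA}).map (algebraMap A (MonoidAlgebra A (Δ ⧸ Δr))))
        (Mr ⧸ ((Ideal.span {fA}).map (algebraMap A (MonoidAlgebra A (Δ ⧸ Δr))) •
          (⊤ : Submodule (MonoidAlgebra A (Δ ⧸ Δr)) Mr)))))
    (N : Type*) [AddCommGroup N] [Module A N] [Module (MonoidAlgebra A (Δ ⧸ Δs)) N]
    [IsScalarTower A (MonoidAlgebra A (Δ ⧸ Δs)) N]
    (hNfree : Nonempty (Module.Basis (Fin d) (MonoidAlgebra A (Δ ⧸ Δs)) N))
    (φ : Mr →ₛₗ[MonoidAlgebra.mapDomainRingHom A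
        (QuotientGroup.map Δr Δs (MonoidHom.id Δ) hrs)] N)
    (hredsurj : ∀ y : N, ∃ m : Mr, y - φ m ∈ (Ideal.span {fA} • (⊤ : Submodule A N))) :
    Function.Surjective φ ∧
      LinearMap.ker φ = (RingHom.ker (MonoidAlgebra.mapDomainRingHom A
        (QuotientGroup.map Δr Δs (MonoidHom.id Δ) hrs))) •
          (⊤ : Submodule (MonoidAlgebra A (Δ ⧸ Δr)) Mr) :=
  stmt_11_general A fA hfA Δ Δr Δs hrs Mr d hredfree N hNfree φ hredsurj
end
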